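/- arXiv:1109.4668 — 3 statements merged into one kernel-verified Lean document; each statement's English description precedes it below -/
import Mathlib

section
/- Let h ≥ 1 and let v : {0,1}^{h−1} → ℝ satisfy Σ_s v_s = 0 and Σ^{(h−1)} v = λ v for some λ ∈ ℝ. Define w⁺, w⁻ : {0,1}^h → ℝ by w⁺(b·s) = v_s and w⁻(b·s) = (−1)^b v_s for b ∈ {0,1} and s ∈ {0,1}^{h−1} (where b·s denotes prepending bit b to s). Then Σ^{(h)} w⁺ = λ w⁺ and Σ^{(h)} w⁻ = λ w⁻. -/
open Finset

/-- Length of the longest common prefix of two binary strings of length `h`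
(equal to `h` when the strings coincide). -/
def lcpLen (h : ℕ) (s t : Fin h → Bool) : ℕ :=
  (Finset.univ.filter (fun i : Fin h => ∀ j : Fin h, j ≤ i → s j = t j)).card

/-- Tree distance between two leaves of the `h`-level balanced binary tree. -/
def treeDist (h : ℕ) (s t : Fin h → Bool) : ℕ :=
  2 * (h - lcpLen h s t)

/-- Leaf covariance matrix `Σ^{(h)}` with correlation parameter `ρ`. -/
noncomputable def SigmaLeaf (h : ℕ) (ρ : ℝ) :
    Matrix (Fin h → Bool) (Fin h → Bool) ℝ :=
  fun s t => ρ ^ treeDist h s t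

lemma lcpLen_cons (h : ℕ) (b c : Bool) (s t : Fin h → Bool) :
    lcpLen (h+1) (Fin.cons b s) (Fin.cons c t)
      = if b = c then lcpLen h s t + 1 else 0 := by
  classical
  by_cases hbc : b = c
  · subst hbc
    simp only [if_pos rfl]
    unfold lcpLen
    have hset : (Finset.univ.filter (fun i : Fin (h+1) =>
        ∀ j : Fin (h+1), j ≤ i →
          (Fin.cons b s : Fin (h+1) → Bool) j = (Fin.cons b t : Fin (h+1) → Bool) j))
        = insert 0 ((Finset.univ.filter
            (fun i : Fin h => ∀ j : Fin h, j ≤ i → s j = t j)).image Fin.succ) := by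
      ext i
      simp only [Finset.mem_insert, Finset.mem_image, Finset.mem_filter,
        Finset.mem_univ, true_and]
      constructor
      · intro hi
        rcases Fin.eq_zero_or_eq_succ i with rfl | ⟨i', rfl⟩
        · exact Or.inl rfl
        · refine Or.inr ⟨i', fun j hj => ?_, rfl⟩
          have := hi j.succ (Fin.succ_le_succ_iff.mpr hj)
          simpa using this
      · rintro (rfl | ⟨i', hi', rfl⟩)
        · intro j hj
          have hj0 : j = 0 := Fin.le_zero_iff.mp hj
          subst hj0; rfl
        · intro j hj
          rcases Fin.eq_zero_or_eq_succ j with rfl | ⟨j', rfl⟩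
          · rfl
          · have := hi' j' (Fin.succ_le_succ_iff.mp hj)
            simpa using this
    have h0 : (0 : Fin (h+1)) ∉ (Finset.univ.filter
        (fun i : Fin h => ∀ j : Fin h, j ≤ i → s j = t j)).image Fin.succ := by
      simp only [Finset.mem_image, not_exists, not_and]
      intro x _
      exact (Fin.succ_ne_zero x)
    rw [hset, Finset.card_insert_of_notMem h0,
      Finset.card_image_of_injective _ (Fin.succ_injective _)]
    simp
  · simp only [if_neg hbc]
    unfold lcpLen
    rw [Finset.card_eq_zero]
    ext i
    simp only [Finset.mem_filter, Finset.mem_univ, true_and,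
      Finset.notMem_empty, iff_false]
    intro hi
    have := hi 0 (Fin.zero_le i)
    simp only [Fin.cons_zero] at this
    exact hbc this

lemma treeDist_cons (h : ℕ) (b c : Bool) (s t : Fin h → Bool) :
    treeDist (h+1) (Fin.cons b s) (Fin.cons c t)
      = if b = c then treeDist h s t else 2*(h+1) := by
  unfold treeDist
  rw [lcpLen_cons]
  by_cases hbc : b = c
  · simp [hbc, Nat.succ_sub_succ]
  · simp [hbc]

lemma lift_aux (h : ℕ) (ρ : ℝ) (v : (Fin h → Bool) → ℝ)
    (hsum : ∑ s : Fin h → Bool, v s = 0)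
    (lam : ℝ) (heig : (SigmaLeaf h ρ).mulVec v = lam • v)
    (w : Bool → ℝ) :
    (SigmaLeaf (h+1) ρ).mulVec (fun u => w (u 0) * v (Fin.tail u))
      = lam • (fun u : Fin (h+1) → Bool => w (u 0) * v (Fin.tail u)) := by
  classical
  funext u
  have heig' : ∀ s, ∑ t, ρ ^ treeDist h s t * v t = lam * v s := by
    intro s
    have := congrFun heig s
    simpa [Matrix.mulVec, dotProduct, SigmaLeaf] using this
  have hu : u = Fin.cons (u 0) (Fin.tail u) := (Fin.cons_self_tail u).symm
  have hd : ∀ (c : Bool) (t : Fin h → Bool),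
      treeDist (h+1) u (Fin.cons c t)
        = if u 0 = c then treeDist h (Fin.tail u) t else 2*(h+1) := by
    intro c t
    conv_lhs => rw [hu]
    rw [treeDist_cons]
  have hz : ∀ (a b : ℝ), (∑ t : Fin h → Bool, a * (b * v t)) = 0 := by
    intro a b
    calc (∑ t : Fin h → Bool, a * (b * v t)) = ∑ t : Fin h → Bool, (a*b) * v t := by
          simp [mul_assoc]
      _ = (a*b) * ∑ t : Fin h → Bool, v t := (Finset.mul_sum _ _ _).symm
      _ = 0 := by rw [hsum, mul_zero]
  have he : ∀ (c : ℝ) (s : Fin h → Bool),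
      (∑ t, ρ^(treeDist h s t) * (c * v t)) = c * (lam * v s) := by
    intro c s
    have key : ∀ t, ρ^(treeDist h s t) * (c * v t) = c * (ρ^(treeDist h s t) * v t) :=
      fun t => by ring
    rw [Finset.sum_congr rfl (fun t _ => key t), ← Finset.mul_sum, heig' s]
  simp only [Matrix.mulVec, dotProduct, Pi.smul_apply, smul_eq_mul, SigmaLeaf]
  rw [← Equiv.sum_comp (Fin.consEquiv (fun _ : Fin (h+1) => Bool))
    (fun u' => ρ ^ treeDist (h+1) u u' * (w (u' 0) * v (Fin.tail u')))]
  rw [Fintype.sum_prod_type]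
  have happ : ∀ (c : Bool) (t : Fin h → Bool),
      (Fin.consEquiv fun _ : Fin (h+1) => Bool) (c, t) = Fin.cons c t := fun _ _ => rfl
  simp only [happ, Fin.cons_zero, Fin.tail_cons, hd]
  rw [Fintype.sum_bool]
  cases hb : u 0 <;>
    simp only [hb, Bool.false_eq_true, Bool.true_eq_false, if_true, if_false,
      ite_true, ite_false, reduceIte, hz, he] <;> ring

/-- If `v` is a mean-zero eigenvector of `Σ^{(h)}` with eigenvalue `λ`, then both of its
lifts `w⁺(b·s) = v s` and `w⁻(b·s) = (−1)^b v s` to level `h+1` are eigenvectors of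
`Σ^{(h+1)}` with the same eigenvalue `λ`.  (Here `b·s` denotes prepending the bit `b`,
i.e. `Fin.cons b s`, so that `w (b·s) = v s` reads `w u = v (Fin.tail u)`.) -/
theorem eigenvector_lift (h : ℕ) (ρ : ℝ) (hρ : ρ ∈ Set.Ioo (0:ℝ) 1)
    (v : (Fin h → Bool) → ℝ) (hsum : ∑ s : Fin h → Bool, v s = 0)
    (lam : ℝ) (heig : (SigmaLeaf h ρ).mulVec v = lam • v) :
    (SigmaLeaf (h + 1) ρ).mulVec (fun u => v (Fin.tail u)) =
      lam • (fun u : Fin (h + 1) → Bool => v (Fin.tail u)) ∧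
    (SigmaLeaf (h + 1) ρ).mulVec
        (fun u => (if u 0 then (-1 : ℝ) else 1) * v (Fin.tail u)) =
      lam • (fun u : Fin (h + 1) → Bool =>
        (if u 0 then (-1 : ℝ) else 1) * v (Fin.tail u)) := by
  constructor
  · have := lift_aux h ρ v hsum lam heig (fun _ => 1)
    simpa using this
  · exact lift_aux h ρ v hsum lam heig (fun b => if b then (-1:ℝ) else 1)
end

section
/- For each choice of sign, let β_h^± = ((R_h − 1) ± √((R_h − 1)² + 4 ρ^{2h} 2^h)) / (2 ρ^h 2^h) and λ_h^± = 1 + β_h^± 2^h ρ^h. Then the vector on {root} ∪ {0,1}^h whose root coordinate is 1 and whose leaf coordinates are all equal to β_h^± is an eigenvector of the augmented covariance matrix Σ_*^{(h)} with eigenvalue λ_h^±; moreover λ_h^+ λ_h^- = R_h − (2ρ²)^h. -/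
/-!
Counting leaves by their distance from a fixed leaf (`2^(l-1)` of them at distance `2l`) shows that
every row of the leaf block `Σ^{(h)}` sums to `R_h`. Hence `Σ_*` maps `(x, β 𝟏)` to
`(x + 2^h ρ^h β, (ρ^h x + R_h β) 𝟏)`, i.e. acts on this plane by `[[1, 2^h ρ^h], [ρ^h, R_h]]`.
For `x = 1` the eigenvalue equation is the quadratic `ρ^h 2^h β² - (R_h - 1) β - ρ^h = 0`, whose
roots are `β_h^±`, and `λ_h^+ λ_h^-` is the determinant `R_h - 2^h ρ^{2h}` of that `2 × 2` matrix.
-/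

open Finset

/-- `R_h = 1 + Σ_{l=1}^{h} ρ^{2l} 2^{l−1}`. -/
noncomputable def Rh (h : ℕ) (ρ : ℝ) : ℝ :=
  1 + ∑ l ∈ Finset.range h, ρ ^ (2 * (l + 1)) * 2 ^ l

/-- Augmented covariance matrix `Σ_*^{(h)}`, indexed by `{root} ∪ {0,1}^h`
(`none` is the root): it agrees with `Σ^{(h)}` on pairs of leaves, has diagonal
root entry `1`, and entries `ρ^h` between the root and every leaf. -/
noncomputable def SigmaStar (h : ℕ) (ρ : ℝ) :
    Matrix (Option (Fin h → Bool)) (Option (Fin h → Bool)) ℝ :=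
  fun u v =>
    match u, v with
    | none, none => 1
    | none, some _ => ρ ^ h
    | some _, none => ρ ^ h
    | some s, some t => ρ ^ treeDist h s t

/-- `β_h^±`, encoded via a sign `σ ∈ {1, −1}`. -/
noncomputable def betaPM (h : ℕ) (ρ σ : ℝ) : ℝ :=
  ((Rh h ρ - 1) + σ * Real.sqrt ((Rh h ρ - 1) ^ 2 + 4 * ρ ^ (2 * h) * 2 ^ h)) /
    (2 * ρ ^ h * 2 ^ h)

/-- `λ_h^± = 1 + β_h^± 2^h ρ^h`. -/
noncomputable def lamPM (h : ℕ) (ρ σ : ℝ) : ℝ :=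
  1 + betaPM h ρ σ * 2 ^ h * ρ ^ h

section Tree

variable {h : ℕ}

lemma lcpLen_cons_cons_of_ne {a b : Bool} (hab : a ≠ b) (s t : Fin h → Bool) :
    lcpLen (h + 1) (Fin.cons a s) (Fin.cons b t) = 0 := by
  simp [lcpLen, Fin.forall_fin_succ, hab]

lemma lcpLen_cons_cons_self (a : Bool) (s t : Fin h → Bool) :
    lcpLen (h + 1) (Fin.cons a s) (Fin.cons a t) = lcpLen h s t + 1 := by
  simp only [lcpLen, Finset.card_filter, Fin.sum_univ_succ, Fin.forall_fin_succ, Fin.succ_le_succ_iff,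
    Fin.cons_zero, Fin.cons_succ, Fin.zero_le, Fin.le_zero_iff, Fin.succ_ne_zero, imp_self, true_and,
    false_imp_iff, implies_true, if_true]
  exact add_comm _ _

lemma treeDist_cons_cons_of_ne {a b : Bool} (hab : a ≠ b) (s t : Fin h → Bool) :
    treeDist (h + 1) (Fin.cons a s) (Fin.cons b t) = 2 * (h + 1) := by
  rw [treeDist, lcpLen_cons_cons_of_ne hab, Nat.sub_zero]

lemma treeDist_cons_cons_self (a : Bool) (s t : Fin h → Bool) :
    treeDist (h + 1) (Fin.cons a s) (Fin.cons a t) = treeDist h s t := by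
  rw [treeDist, treeDist, lcpLen_cons_cons_self, Nat.add_sub_add_right]

lemma sum_pi_fin_succ {α M : Type*} [Fintype α] [AddCommMonoid M] (f : (Fin (h + 1) → α) → M) :
    ∑ t, f t = ∑ a : α, ∑ t : Fin h → α, f (Fin.cons a t) := by
  rw [← Fintype.sum_prod_type']
  exact (Fintype.sum_equiv (Fin.consEquiv fun _ => α) _ _ fun _ => rfl).symm

end Tree

lemma Rh_succ (h : ℕ) (ρ : ℝ) : Rh (h + 1) ρ = Rh h ρ + 2 ^ h * ρ ^ (2 * (h + 1)) := by
  rw [Rh, Rh, Finset.sum_range_succ, mul_comm (ρ ^ _), add_assoc]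

theorem sum_pow_treeDist (ρ : ℝ) {h : ℕ} (s : Fin h → Bool) :
    ∑ t, ρ ^ treeDist h s t = Rh h ρ := by
  induction h with
  | zero => simp [treeDist, Rh]
  | succ h ih =>
    obtain ⟨a, s, rfl⟩ : ∃ a s', s = Fin.cons a s' := ⟨s 0, Fin.tail s, (Fin.cons_self_tail s).symm⟩
    have far : ∑ t : Fin h → Bool, ρ ^ treeDist (h + 1) (Fin.cons a s) (Fin.cons (!a) t) =
        2 ^ h * ρ ^ (2 * (h + 1)) := by
      simp [treeDist_cons_cons_of_ne (Bool.not_ne_self a).symm]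
    have near : ∑ t : Fin h → Bool, ρ ^ treeDist (h + 1) (Fin.cons a s) (Fin.cons a t) = Rh h ρ := by
      simpa only [treeDist_cons_cons_self] using ih s
    rw [sum_pi_fin_succ, Rh_succ, ← near, ← far]
    cases a <;> simp only [Fintype.sum_bool, Bool.not_false, Bool.not_true, add_comm]

theorem SigmaStar_mulVec (h : ℕ) (ρ x β : ℝ) :
    (SigmaStar h ρ).mulVec (fun u => Option.elim u x fun _ => β) =
      fun u => Option.elim u (x + 2 ^ h * ρ ^ h * β) fun _ => ρ ^ h * x + Rh h ρ * β := by
  funext u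
  cases u with
  | none =>
    simp only [Matrix.mulVec, dotProduct, SigmaStar, Fintype.sum_option, Option.elim, one_mul,
      sum_const, card_univ, Fintype.card_pi, Fintype.card_bool, prod_const, Fintype.card_fin,
      nsmul_eq_mul, Nat.cast_pow, Nat.cast_ofNat]
    ring
  | some s =>
    simp only [Matrix.mulVec, dotProduct, SigmaStar, Fintype.sum_option, Option.elim,
      ← Finset.sum_mul, sum_pow_treeDist]

section QuadraticRoots

variable {K : Type*} [Field K] [NeZero (2 : K)] {a b c s : K}

theorem quadratic_root_of_sq_eq_discrim (ha : a ≠ 0) (hs : s ^ 2 = b ^ 2 + 4 * a * c) {σ : K}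
    (hσ : σ ^ 2 = 1) : a * ((b + σ * s) / (2 * a)) ^ 2 - b * ((b + σ * s) / (2 * a)) - c = 0 := by
  field_simp
  linear_combination s ^ 2 * hσ + hs

theorem one_add_mul_root_mul_one_add_mul_root (ha : a ≠ 0) (hs : s ^ 2 = b ^ 2 + 4 * a * c) :
    (1 + a * ((b + 1 * s) / (2 * a))) * (1 + a * ((b + -1 * s) / (2 * a))) = 1 + b - a * c := by
  field_simp
  linear_combination -hs

end QuadraticRoots

/-- `β_h^±` is the quadratic-formula root of `a β² - b β - c` with `a = ρ^h 2^h`, `b = R_h - 1`,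
`c = ρ^h`. -/
lemma betaPM_eq (h : ℕ) (ρ σ : ℝ) :
    betaPM h ρ σ = (Rh h ρ - 1 + σ * √((Rh h ρ - 1) ^ 2 + 4 * (ρ ^ h * 2 ^ h) * ρ ^ h)) /
      (2 * (ρ ^ h * 2 ^ h)) := by
  rw [betaPM, ← mul_assoc]
  ring_nf

lemma sq_sqrt_discrim (h : ℕ) (ρ : ℝ) : √((Rh h ρ - 1) ^ 2 + 4 * (ρ ^ h * 2 ^ h) * ρ ^ h) ^ 2 =
    (Rh h ρ - 1) ^ 2 + 4 * (ρ ^ h * 2 ^ h) * ρ ^ h :=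
  Real.sq_sqrt <| by
    nlinarith [sq_nonneg (Rh h ρ - 1), sq_nonneg (ρ ^ h), pow_pos (two_pos : (0 : ℝ) < 2) h]

section Eigen

variable {h : ℕ} {ρ : ℝ}

theorem SigmaStar_mulVec_eq_lamPM_smul (hρ : ρ ≠ 0) {σ : ℝ} (hσ : σ ^ 2 = 1) :
    (SigmaStar h ρ).mulVec (fun u => Option.elim u 1 fun _ => betaPM h ρ σ) =
      lamPM h ρ σ • fun u => Option.elim u 1 fun _ => betaPM h ρ σ := by
  have hroot := quadratic_root_of_sq_eq_discrim (by positivity) (sq_sqrt_discrim h ρ) hσ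
  rw [← betaPM_eq] at hroot
  rw [SigmaStar_mulVec]
  funext u
  rcases u with _ | s
  · simp only [Option.elim, Pi.smul_apply, smul_eq_mul, lamPM]
    ring
  · simp only [Option.elim, Pi.smul_apply, smul_eq_mul, lamPM]
    linear_combination -hroot

theorem lamPM_one_mul_lamPM_neg_one (hρ : ρ ≠ 0) :
    lamPM h ρ 1 * lamPM h ρ (-1) = Rh h ρ - (2 * ρ ^ 2) ^ h := by
  have hvieta := one_add_mul_root_mul_one_add_mul_root (by positivity) (sq_sqrt_discrim h ρ)
  rw [← betaPM_eq, ← betaPM_eq] at hvieta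
  rw [lamPM, lamPM]
  linear_combination hvieta

end Eigen

/-- For each sign, the vector `(1, β_h^± 𝟏)` is an eigenvector of the augmented
covariance matrix `Σ_*^{(h)}` with eigenvalue `λ_h^±`; moreover
`λ_h^+ λ_h^- = R_h − (2ρ²)^h`. -/
theorem augmented_eigenvectors (h : ℕ) (ρ : ℝ) (hρ : ρ ∈ Set.Ioo (0:ℝ) 1) :
    (∀ σ : ℝ, σ = 1 ∨ σ = -1 →
        (SigmaStar h ρ).mulVec (fun u => Option.elim u 1 fun _ => betaPM h ρ σ) =
          lamPM h ρ σ •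
            (fun u : Option (Fin h → Bool) => Option.elim u 1 fun _ => betaPM h ρ σ)) ∧
    lamPM h ρ 1 * lamPM h ρ (-1) = Rh h ρ - (2 * ρ ^ 2) ^ h := by
  have hρ0 : ρ ≠ 0 := hρ.1.ne'
  refine ⟨fun σ hσ => SigmaStar_mulVec_eq_lamPM_smul hρ0 ?_, lamPM_one_mul_lamPM_neg_one hρ0⟩
  rcases hσ with rfl | rfl <;> norm_num
end

section
/- For every h ≥ 0 and ρ ∈ (0,1), the leaf covariance matrix Σ^{(h)} is positive definite (in particular, it is invertible). -/
open Finset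

open Matrix

/-!
Let `B_k = levelMatrix h k`, the `0/1` matrix recording whether two leaves share their first `k` bits,
i.e. lie below the same node of depth `k`. Since `ρ^{2(h-m)} = ρ^{2h} + ∑_{k=1}^{m} ρ^{2(h-k)}(1-ρ²)`,
`Σ^{(h)} = ρ^{2h} B_0 + (1-ρ²) ∑_{k=1}^{h} ρ^{2(h-k)} B_k`. Each `B_k` is the Gram matrix of the
indicator vectors of the depth-`k` nodes, hence positive semidefinite, and `B_h = 1`; a positive
multiple of the identity plus a positive semidefinite matrix is positive definite.
-/

theorem Matrix.posSemidef_ite_eq {ι κ R : Type*} [Fintype ι] [Fintype κ] [DecidableEq κ]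
    [Ring R] [PartialOrder R] [StarRing R] [StarOrderedRing R] (f : ι → κ) :
    (of fun i j => if f i = f j then (1 : R) else 0).PosSemidef := by
  have hgram : (of fun i j => if f i = f j then (1 : R) else 0) =
      (of fun i c => if f i = c then (1 : R) else 0) *
        (of fun i c => if f i = c then (1 : R) else 0)ᴴ := by
    ext i j
    simp [mul_apply, eq_comm, apply_ite star]
  rw [hgram]
  exact posSemidef_self_mul_conjTranspose _

section Tree

variable {h : ℕ}

theorem lcpLen_le (s t : Fin h → Bool) : lcpLen h s t ≤ h :=
  (card_filter_le _ _).trans_eq (card_fin h)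

theorem le_lcpLen_iff {k : ℕ} (hk : k ≤ h) (s t : Fin h → Bool) :
    k ≤ lcpLen h s t ↔ ∀ j : Fin k, s (Fin.castLE hk j) = t (Fin.castLE hk j) := by
  constructor
  · intro hle j
    by_contra hne
    have hsub : univ.filter (fun i : Fin h => ∀ j ≤ i, s j = t j) ⊆ Iio (Fin.castLE hk j) := by
      intro i hi
      simp only [mem_filter, mem_univ, true_and] at hi
      exact mem_Iio.2 (lt_of_not_ge fun hji => hne (hi _ hji))
    have := (card_le_card hsub).trans_eq (Fin.card_Iio _)
    simp only [lcpLen, Fin.val_castLE] at hle this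
    omega
  · intro hagree
    calc k = #(univ : Finset (Fin k)) := (card_fin k).symm
      _ ≤ lcpLen h s t := by
        refine card_le_card_of_injOn (Fin.castLE hk) (fun j _ => ?_) (Fin.castLE_injective hk).injOn
        simp only [coe_filter, mem_univ, true_and, Set.mem_ofPred_eq]
        intro i hi
        simpa using hagree ⟨i, lt_of_le_of_lt (Fin.le_def.1 hi) j.isLt⟩

theorem le_lcpLen_iff_eq (s t : Fin h → Bool) : h ≤ lcpLen h s t ↔ s = t := by
  simp [le_lcpLen_iff le_rfl, funext_iff]

def levelMatrix (h k : ℕ) : Matrix (Fin h → Bool) (Fin h → Bool) ℝ :=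
  of fun s t => if k ≤ lcpLen h s t then 1 else 0

theorem levelMatrix_posSemidef {k : ℕ} (hk : k ≤ h) : (levelMatrix h k).PosSemidef := by
  have hfib : levelMatrix h k =
      of fun s t => if (fun j : Fin k => s (Fin.castLE hk j)) = fun j => t (Fin.castLE hk j)
        then 1 else 0 := by
    ext s t
    simp only [levelMatrix, of_apply, le_lcpLen_iff hk, funext_iff]
  rw [hfib]
  exact posSemidef_ite_eq _

theorem levelMatrix_self : levelMatrix h h = 1 := by
  ext s t
  simp [levelMatrix, one_apply, le_lcpLen_iff_eq]

noncomputable def levelWeight (h : ℕ) (ρ : ℝ) (k : ℕ) : ℝ :=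
  if k = 0 then ρ ^ (2 * h) else ρ ^ (2 * (h - k)) * (1 - ρ ^ 2)

theorem levelWeight_pos {ρ : ℝ} (hρ : ρ ∈ Set.Ioo (0 : ℝ) 1) (k : ℕ) :
    0 < levelWeight h ρ k := by
  obtain ⟨hρ0, hρ1⟩ := hρ
  have : 0 < 1 - ρ ^ 2 := by nlinarith
  unfold levelWeight
  split_ifs <;> positivity

theorem sum_range_levelWeight (ρ : ℝ) {m : ℕ} (hm : m ≤ h) :
    ∑ k ∈ range (m + 1), levelWeight h ρ k = ρ ^ (2 * (h - m)) := by
  induction m with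
  | zero => simp [levelWeight]
  | succ n ih =>
    rw [sum_range_succ, ih (by omega), levelWeight, if_neg n.succ_ne_zero,
      show 2 * (h - n) = 2 * (h - (n + 1)) + 2 by omega, pow_add]
    ring

theorem sigmaLeaf_eq_sum (ρ : ℝ) :
    SigmaLeaf h ρ = ∑ k ∈ range (h + 1), levelWeight h ρ k • levelMatrix h k := by
  ext s t
  have hlevels : (range (h + 1)).filter (· ≤ lcpLen h s t) = range (lcpLen h s t + 1) := by
    ext k
    simp only [mem_filter, mem_range]
    have := lcpLen_le s t
    omega
  simp only [SigmaLeaf, treeDist, Matrix.sum_apply, Matrix.smul_apply, levelMatrix, of_apply,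
    smul_eq_mul, mul_ite, mul_one, mul_zero, ← sum_filter, hlevels,
    sum_range_levelWeight ρ (lcpLen_le s t)]

end Tree

/-- For every `h ≥ 0` and `ρ ∈ (0,1)`, the leaf covariance matrix `Σ^{(h)}` is
positive definite; in particular it is invertible. -/
theorem sigmaLeaf_posDef (h : ℕ) (ρ : ℝ) (hρ : ρ ∈ Set.Ioo (0:ℝ) 1) :
    (SigmaLeaf h ρ).PosDef ∧ IsUnit (SigmaLeaf h ρ).det := by
  have hpd : (SigmaLeaf h ρ).PosDef := by
    rw [sigmaLeaf_eq_sum, sum_range_succ, levelMatrix_self]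
    refine PosDef.posSemidef_add (posSemidef_sum _ fun k hk => ?_)
      (PosDef.one.smul (levelWeight_pos hρ h))
    exact (levelMatrix_posSemidef (mem_range.1 hk).le).smul (levelWeight_pos hρ k).le
  exact ⟨hpd, (isUnit_iff_isUnit_det _).1 hpd.isUnit⟩
end
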